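/- If a Lie group G acts freely by biholomorphisms on an (n+1)-dimensional complex manifold with strongly pseudoconvex boundary S, and the orbit G·p through some p ∈ S satisfies T_p(G·p) ⊂ T_p^c(S), then dim_ℝ G ≤ n. -/

import Mathlib

open Complex Filter Set Function
open scoped Manifold Topology

set_option maxHeartbeats 1600000

/-- Multiplication by `i`, viewed as an `ℝ`-linear endomorphism of `ℂ^N`. -/
noncomputable def Jstd (N : ℕ) :
    EuclideanSpace ℂ (Fin N) →ₗ[ℝ] EuclideanSpace ℂ (Fin N) :=
  (Complex.I • (LinearMap.id : EuclideanSpace ℂ (Fin N) →ₗ[ℂ] EuclideanSpace ℂ (Fin N))).restrictScalars ℝ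

lemma Jstd_apply (N : ℕ) (v : EuclideanSpace ℂ (Fin N)) : Jstd N v = Complex.I • v := by
  simp [Jstd]

lemma Jstd_Jstd (N : ℕ) (v : EuclideanSpace ℂ (Fin N)) : Jstd N (Jstd N v) = -v := by
  simp [Jstd_apply, smul_smul, Complex.I_mul_I]

lemma finrank_real_euc (N : ℕ) : Module.finrank ℝ (EuclideanSpace ℂ (Fin N)) = 2 * N := by
  rw [← Module.finrank_mul_finrank ℝ ℂ (EuclideanSpace ℂ (Fin N)),
    Complex.finrank_real_complex, finrank_euclideanSpace_fin]

-- linear algebra endgame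
lemma endgame {d N : ℕ} (L : EuclideanSpace ℝ (Fin d) →L[ℝ] EuclideanSpace ℂ (Fin N))
    (φ : EuclideanSpace ℂ (Fin N) →L[ℝ] ℝ) (hφ : φ ≠ 0)
    (hLinj : Function.Injective L)
    (ht1 : ∀ u, φ (L u) = 0) (ht2 : ∀ u, φ (Jstd N (L u)) = 0)
    (hdisj : ∀ v : EuclideanSpace ℂ (Fin N),
      v ∈ LinearMap.range L.toLinearMap →
      Jstd N v ∈ LinearMap.range L.toLinearMap →
      v = 0) :
    d + 1 ≤ N := by
  classical
  set E := EuclideanSpace ℂ (Fin N)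
  set J := Jstd N
  set Lℓ : EuclideanSpace ℝ (Fin d) →ₗ[ℝ] E := L.toLinearMap
  set W : Submodule ℝ E := LinearMap.range Lℓ with hW
  set φℓ : E →ₗ[ℝ] ℝ := φ.toLinearMap
  set ψℓ : E →ₗ[ℝ] ℝ := φℓ.comp J
  -- J as a linear equivalence
  have hJJ' : ∀ f : E →ₗ[ℝ] E, (f = J ∘ₗ (-J)) ∨ (f = (-J) ∘ₗ J) → f = LinearMap.id := by
    rintro f (rfl | rfl) <;>
    · apply LinearMap.ext; intro v
      simp only [LinearMap.comp_apply, LinearMap.neg_apply, map_neg, LinearMap.id_apply]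
      rw [Jstd_Jstd]; simp
  let Je : E ≃ₗ[ℝ] E := LinearEquiv.ofLinear J (-J)
    (hJJ' _ (Or.inl rfl)) (hJJ' _ (Or.inr rfl))
  have hJe : (Je : E →ₗ[ℝ] E) = J := rfl
  have hWd : Module.finrank ℝ W = d := by
    rw [LinearMap.finrank_range_of_inj hLinj, finrank_euclideanSpace_fin]
  have hJWd : Module.finrank ℝ (W.map J) = d := by
    rw [← hJe, LinearEquiv.finrank_map_eq, hWd]
  -- disjointness
  have hinf : W ⊓ W.map J = ⊥ := by
    rw [eq_bot_iff]
    rintro v ⟨hv1, hv2⟩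
    obtain ⟨w, hw, rfl⟩ := hv2
    have hJv : J (J w) ∈ W := by
      rw [Jstd_Jstd]
      exact W.neg_mem hw
    have := hdisj (J w) hv1 hJv
    simp [this]
  -- the complex tangent space H
  set H : Submodule ℝ E := LinearMap.ker φℓ ⊓ LinearMap.ker ψℓ
  have hsup : W ⊔ W.map J ≤ H := by
    apply sup_le
    · rintro v ⟨u, rfl⟩
      exact ⟨ht1 u, ht2 u⟩
    · rintro v ⟨w, ⟨u, rfl⟩, rfl⟩
      refine ⟨ht2 u, ?_⟩
      show φℓ (J (J (Lℓ u))) = 0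
      rw [Jstd_Jstd]
      have h := ht1 u
      simp only [map_neg, neg_eq_zero]
      exact h
  -- finrank H = 2N - 2
  have hsurj : Function.Surjective (φℓ.prod ψℓ) := by
    obtain ⟨v₀, hv₀⟩ : ∃ v₀, φ v₀ ≠ 0 := by
      by_contra h
      push_neg at h
      exact hφ (by ext v; simp [h v])
    rintro ⟨s, t⟩
    set c := φℓ v₀
    set e := φℓ (J v₀)
    have hΔ : c ^ 2 + e ^ 2 ≠ 0 := by positivity
    refine ⟨((s * c + t * e) / (c ^ 2 + e ^ 2)) • v₀
      + ((s * e - t * c) / (c ^ 2 + e ^ 2)) • (J v₀), ?_⟩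
    have hJJ : φℓ (J (J v₀)) = -c := by rw [Jstd_Jstd]; simp [c]
    simp only [LinearMap.prod_apply, Function.prod, map_add, map_smul, smul_eq_mul, Prod.mk.injEq,
      Prod.smul_mk, Prod.mk_add_mk]
    constructor
    · field_simp
      ring
    · show _ * φℓ (J v₀) + _ * φℓ (J (J v₀)) = t
      rw [hJJ]
      field_simp
      ring
  have hkerH : H = LinearMap.ker (φℓ.prod ψℓ) := by
    rw [LinearMap.ker_prod]
  have hrank : Module.finrank ℝ (LinearMap.range (φℓ.prod ψℓ))
      + Module.finrank ℝ (LinearMap.ker (φℓ.prod ψℓ)) = 2 * N := by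
    rw [LinearMap.finrank_range_add_finrank_ker, finrank_real_euc]
  have hrange : Module.finrank ℝ (LinearMap.range (φℓ.prod ψℓ)) = 2 := by
    rw [LinearMap.range_eq_top.mpr hsurj]
    simp [Module.finrank_prod]
  have hHrank : Module.finrank ℝ H = 2 * N - 2 := by
    rw [hkerH]; omega
  have hsum : Module.finrank ℝ (W ⊔ W.map J : Submodule ℝ E) = 2 * d := by
    have h := Submodule.finrank_sup_add_finrank_inf_eq W (W.map J)
    rw [hinf, finrank_bot, add_zero, hWd, hJWd] at h
    omega
  have hle : Module.finrank ℝ (W ⊔ W.map J : Submodule ℝ E) ≤ Module.finrank ℝ H :=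
    Submodule.finrank_mono hsup
  -- need N ≥ 1 : since φ ≠ 0, E ≠ 0
  have hN : 1 ≤ N := by
    by_contra h
    have : N = 0 := by omega
    subst this
    apply hφ
    ext v
    have : v = 0 := Subsingleton.elim v 0
    simp [this]
  omega


section AuxMain
variable {d N : ℕ}
local notation "D" => EuclideanSpace ℝ (Fin d)
local notation "E" => EuclideanSpace ℂ (Fin N)

theorem aux_main
    (ρ : EuclideanSpace ℂ (Fin N) → ℝ) (hρ : ContDiff ℝ 2 ρ)
    (p : EuclideanSpace ℂ (Fin N))
    (b : EuclideanSpace ℝ (Fin d) → EuclideanSpace ℂ (Fin N) → EuclideanSpace ℂ (Fin N))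
    (m : EuclideanSpace ℝ (Fin d) → EuclideanSpace ℝ (Fin d) → EuclideanSpace ℝ (Fin d))
    (x₁ : EuclideanSpace ℝ (Fin d))
    (hbE : ∀ᶠ x in 𝓝 x₁, ContDiffAt ℝ 2 (fun q : (EuclideanSpace ℝ (Fin d)) × (EuclideanSpace ℂ (Fin N)) => b q.1 q.2) (x, p))
    (hb1 : ∀ z, b x₁ z = z)
    (hhol : ∀ x, Differentiable ℂ (b x))
    (horb : ∀ x y, ρ (b x (b y p)) = 0)
    (hmE : ∀ᶠ x in 𝓝 x₁, ContDiffAt ℝ 2 (fun q : (EuclideanSpace ℝ (Fin d)) × (EuclideanSpace ℝ (Fin d)) => m q.1 q.2) (x, x₁))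
    (hm1 : ∀ᶠ x in 𝓝 x₁, m x x₁ = x)
    (hm2 : ∀ᶠ y in 𝓝 x₁, m x₁ y = y)
    (hgrp : ∀ᶠ q : (EuclideanSpace ℝ (Fin d)) × (EuclideanSpace ℝ (Fin d)) in 𝓝 (x₁, x₁),
      b q.1 (b q.2 p) = b (m q.1 q.2) p)
    (hinjF : ∃ s ∈ 𝓝 x₁, Set.InjOn (fun x => b x p) s)
    (htg : ∀ u, fderiv ℝ ρ p (fderiv ℝ (fun x => b x p) x₁ u) = 0 ∧
       fderiv ℝ ρ p (Jstd N (fderiv ℝ (fun x => b x p) x₁ u)) = 0)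
    (hspc : ∀ v : EuclideanSpace ℂ (Fin N), v ≠ 0 → fderiv ℝ ρ p v = 0 →
       fderiv ℝ ρ p (Jstd N v) = 0 →
       0 < iteratedFDeriv ℝ 2 ρ p ![v, v] + iteratedFDeriv ℝ 2 ρ p ![Jstd N v, Jstd N v]) :
    (∀ v : EuclideanSpace ℂ (Fin N),
        (∃ u, fderiv ℝ (fun x => b x p) x₁ u = v) →
        (∃ u', fderiv ℝ (fun x => b x p) x₁ u' = Jstd N v) → v = 0) ∧
      Function.Injective (fderiv ℝ (fun x => b x p) x₁) := by
  have h12 : (1 : WithTop ℕ∞) + 1 ≤ 2 := by norm_num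
  have h1le2 : (1 : WithTop ℕ∞) ≤ 2 := by norm_num
  set F : D → E := fun x => b x p with hFdef
  -- basic smoothness of F
  have hFc : ∀ᶠ x in 𝓝 x₁, ContDiffAt ℝ 2 F x := by
    filter_upwards [hbE] with x hx
    exact hx.comp x (contDiffAt_id.prodMk contDiffAt_const)
  have hFc1 : ContDiffAt ℝ 2 F x₁ := hFc.self_of_nhds
  have hF1 : F x₁ = p := hb1 p
  have hFd : ∀ᶠ x in 𝓝 x₁, DifferentiableAt ℝ F x := by
    filter_upwards [hFc] with x hx; exact hx.differentiableAt (by norm_num)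
  set L : D →L[ℝ] E := fderiv ℝ F x₁ with hLdef
  have hLF : HasFDerivAt F L x₁ := hFd.self_of_nhds.hasFDerivAt
  -- derivative data for ρ
  have hρd : Differentiable ℝ ρ := hρ.differentiable (by norm_num)
  have hdρ : ContDiff ℝ 1 (fderiv ℝ ρ) := hρ.fderiv_right (le_refl 2)
  set φ : E →L[ℝ] ℝ := fderiv ℝ ρ p with hφdef
  set H2 : E →L[ℝ] (E →L[ℝ] ℝ) := fderiv ℝ (fderiv ℝ ρ) p with hH2def
  have hH : HasFDerivAt (fderiv ℝ ρ) H2 p := ((hdρ.differentiable (by norm_num)) p).hasFDerivAt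
  -- the family of spatial derivatives
  set A₂ : D → (E →L[ℝ] E) := fun x => fderiv ℝ (b x) p with hA₂def
  have hA₂c : ContDiffAt ℝ 1 A₂ x₁ :=
    ContDiffAt.fderiv (hbE.self_of_nhds) contDiffAt_const (le_refl 2)
  set M : D →L[ℝ] (E →L[ℝ] E) := fderiv ℝ A₂ x₁ with hMdef
  have hMd : HasFDerivAt A₂ M x₁ := (hA₂c.differentiableAt (by norm_num)).hasFDerivAt
  have hA₂1 : A₂ x₁ = ContinuousLinearMap.id ℝ (EuclideanSpace ℂ (Fin N)) := by
    have hid : b x₁ = id := funext hb1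
    rw [hA₂def]; simp only [hid, fderiv_id]
  -- chain rule fact (i)
  have hcomp : ∀ x, HasFDerivAt (fun y => b x (F y)) ((A₂ x).comp L) x₁ := by
    intro x
    have hbxp : HasFDerivAt (b x) (A₂ x) (F x₁) := by
      rw [hF1]; exact (((hhol x) p).restrictScalars ℝ).hasFDerivAt
    exact hbxp.comp x₁ hLF
  -- first-order consequence of orbit invariance
  have hζ : ∀ x, (fderiv ℝ ρ (F x)).comp ((A₂ x).comp L) = (0 : (EuclideanSpace ℝ (Fin d)) →L[ℝ] ℝ) := by
    intro x
    have hψ : (fun y => ρ (b x (F y))) = fun _ => (0 : ℝ) := funext fun y => horb x y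
    have h1 : HasFDerivAt (fun y => ρ (b x (F y))) ((fderiv ℝ ρ (F x)).comp ((A₂ x).comp L)) x₁ := by
      have hρx : HasFDerivAt ρ (fderiv ℝ ρ (F x)) (b x (F x₁)) := by
        rw [hF1]; exact (hρd (b x p)).hasFDerivAt
      exact hρx.comp x₁ (hcomp x)
    have h2 : HasFDerivAt (fun y => ρ (b x (F y))) (0 : (EuclideanSpace ℝ (Fin d)) →L[ℝ] ℝ) x₁ := by
      rw [hψ]; exact hasFDerivAt_const 0 x₁
    exact h1.unique h2
  -- (E3)
  have E3 : ∀ u u', H2 (L u) (L u') + φ (M u (L u')) = 0 := by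
    intro u u'
    set c : D → (E →L[ℝ] ℝ) := fun x => fderiv ℝ ρ (F x) with hcdef
    set w : D → E := fun x => A₂ x (L u') with hwdef
    have hwd : HasFDerivAt w ((A₂ x₁).comp (0 : (EuclideanSpace ℝ (Fin d)) →L[ℝ] (EuclideanSpace ℂ (Fin N))) + M.flip (L u')) x₁ :=
      hMd.clm_apply (hasFDerivAt_const (L u') x₁)
    have hcd : HasFDerivAt c (H2.comp L) x₁ := by
      have hHp : HasFDerivAt (fderiv ℝ ρ) H2 (F x₁) := by rw [hF1]; exact hH
      exact hHp.comp x₁ hLF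
    have hzfun : (fun x => (c x) (w x)) = fun _ => (0 : ℝ) := by
      funext x
      have := congrArg (fun T : (EuclideanSpace ℝ (Fin d)) →L[ℝ] ℝ => T u') (hζ x)
      simpa [c, w] using this
    have htot : HasFDerivAt (fun x => (c x) (w x))
        ((c x₁).comp ((A₂ x₁).comp (0 : (EuclideanSpace ℝ (Fin d)) →L[ℝ] (EuclideanSpace ℂ (Fin N))) + M.flip (L u')) + (H2.comp L).flip (w x₁)) x₁ :=
      hcd.clm_apply hwd
    have hzero : ((c x₁).comp ((A₂ x₁).comp (0 : (EuclideanSpace ℝ (Fin d)) →L[ℝ] (EuclideanSpace ℂ (Fin N))) + M.flip (L u')) + (H2.comp L).flip (w x₁))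
        = (0 : (EuclideanSpace ℝ (Fin d)) →L[ℝ] ℝ) := by
      rw [hzfun] at htot
      exact htot.unique (hasFDerivAt_const 0 x₁)
    have := congrArg (fun T : (EuclideanSpace ℝ (Fin d)) →L[ℝ] ℝ => T u) hzero
    have hcx₁ : c x₁ = φ := by rw [hcdef]; simp only [hF1, hφdef]
    have hwx₁ : w x₁ = L u' := by rw [hwdef]; simp only [hA₂1]; rfl
    simp only [ContinuousLinearMap.add_apply, ContinuousLinearMap.comp_apply,
      ContinuousLinearMap.flip_apply, ContinuousLinearMap.zero_apply, hcx₁, hwx₁,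
      ContinuousLinearMap.coe_comp', comp_apply, map_zero, zero_add] at this
    linarith [this]
  -- the key eventual identity
  have hgrp' : ∀ᶠ x in 𝓝 x₁, ∀ᶠ y in 𝓝 x₁, b x (F y) = F (m x y) := by
    rw [nhds_prod_eq] at hgrp
    exact hgrp.curry
  have hkey : ∀ᶠ x in 𝓝 x₁,
      (A₂ x).comp L = (fderiv ℝ F x).comp (fderiv ℝ (fun y => m x y) x₁) := by
    filter_upwards [hgrp', hmE, hm1, hFd] with x hx1 hx2 hx3 hx4
    have hmx : DifferentiableAt ℝ (fun y => m x y) x₁ :=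
      (hx2.comp x₁ (contDiffAt_const.prodMk contDiffAt_id)).differentiableAt (by norm_num)
    have hR : HasFDerivAt (fun y => F (m x y))
        ((fderiv ℝ F x).comp (fderiv ℝ (fun y => m x y) x₁)) x₁ := by
      have hFmx : HasFDerivAt F (fderiv ℝ F x) (m x x₁) := by rw [hx3]; exact hx4.hasFDerivAt
      exact hFmx.comp x₁ hmx.hasFDerivAt
    exact (hcomp x).unique (hR.congr_of_eventuallyEq hx1)
  -- second derivative of F and its symmetry
  set P : D → (D →L[ℝ] E) := fun x => fderiv ℝ F x with hPdef
  have hPc : ContDiffAt ℝ 1 P x₁ := hFc1.fderiv_right (le_refl 2)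
  set Q : D →L[ℝ] (D →L[ℝ] E) := fderiv ℝ P x₁ with hQdef
  have hPd : HasFDerivAt P Q x₁ := (hPc.differentiableAt (by norm_num)).hasFDerivAt
  have hQsymm : ∀ v w, Q v w = Q w v := by
    intro v w
    refine second_derivative_symmetric_of_eventually (f := F) ?_ hPd v w
    filter_upwards [hFd] with y hy
    exact hy.hasFDerivAt
  -- the derivative of left translations
  set kf : D → (D →L[ℝ] D) := fun x => fderiv ℝ (fun y => m x y) x₁ with hkfdef
  have hkc : ContDiffAt ℝ 1 kf x₁ :=
    ContDiffAt.fderiv (hmE.self_of_nhds) contDiffAt_const (le_refl 2)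
  set r : D →L[ℝ] (D →L[ℝ] D) := fderiv ℝ kf x₁ with hrdef
  have hkd : HasFDerivAt kf r x₁ := (hkc.differentiableAt (by norm_num)).hasFDerivAt
  have hk1 : kf x₁ = ContinuousLinearMap.id ℝ (EuclideanSpace ℝ (Fin d)) := by
    have h : (fun y => m x₁ y) =ᶠ[𝓝 x₁] (id : EuclideanSpace ℝ (Fin d) → EuclideanSpace ℝ (Fin d)) := by
      filter_upwards [hm2] with y hy; exact hy
    have h2 : fderiv ℝ (fun y => m x₁ y) x₁ = ContinuousLinearMap.id ℝ (EuclideanSpace ℝ (Fin d)) := by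
      rw [h.fderiv_eq, fderiv_id]
    exact h2
  -- (E4)
  have E4 : ∀ u u', M u (L u') = Q u u' + L (r u u') := by
    intro u u'
    have hθ : HasFDerivAt (fun x => A₂ x (L u')) ((A₂ x₁).comp (0 : (EuclideanSpace ℝ (Fin d)) →L[ℝ] (EuclideanSpace ℂ (Fin N))) + M.flip (L u')) x₁ :=
      hMd.clm_apply (hasFDerivAt_const (L u') x₁)
    have hκ : HasFDerivAt (fun x => kf x u') ((kf x₁).comp (0 : (EuclideanSpace ℝ (Fin d)) →L[ℝ] (EuclideanSpace ℝ (Fin d))) + r.flip u') x₁ :=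
      hkd.clm_apply (hasFDerivAt_const u' x₁)
    have hθ' : HasFDerivAt (fun x => (P x) (kf x u'))
        ((P x₁).comp ((kf x₁).comp (0 : (EuclideanSpace ℝ (Fin d)) →L[ℝ] (EuclideanSpace ℝ (Fin d))) + r.flip u') + Q.flip (kf x₁ u')) x₁ :=
      hPd.clm_apply hκ
    have heq : (fun x => A₂ x (L u')) =ᶠ[𝓝 x₁] (fun x => (P x) (kf x u')) := by
      filter_upwards [hkey] with x hx
      have := congrArg (fun T : (EuclideanSpace ℝ (Fin d)) →L[ℝ] (EuclideanSpace ℂ (Fin N)) => T u') hx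
      simpa [P, kf] using this
    have huniq := (hθ'.congr_of_eventuallyEq heq).unique hθ
    have := congrArg (fun T : (EuclideanSpace ℝ (Fin d)) →L[ℝ] (EuclideanSpace ℂ (Fin N)) => T u) huniq.symm
    have hPx₁ : P x₁ = L := rfl
    simp only [ContinuousLinearMap.add_apply, ContinuousLinearMap.comp_apply,
      ContinuousLinearMap.flip_apply, ContinuousLinearMap.zero_apply, hk1, hPx₁,
      ContinuousLinearMap.coe_comp', comp_apply, map_zero, zero_add,
      ContinuousLinearMap.id_apply] at this
    rw [this]; abel
  -- complex linearity of M u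
  have hA₂J : ∀ x w, A₂ x (Complex.I • w) = Complex.I • (A₂ x w) := by
    intro x w
    have h := (((hhol x) p).hasFDerivAt.restrictScalars ℝ).fderiv
    rw [hA₂def]
    simp only [h]
    rw [ContinuousLinearMap.coe_restrictScalars']
    exact (fderiv ℂ (b x) p).map_smul Complex.I w
  have hMJ : ∀ u w, M u (Complex.I • w) = Complex.I • (M u w) := by
    intro u w
    have h1 : HasFDerivAt (fun x => A₂ x (Complex.I • w))
        ((A₂ x₁).comp (0 : (EuclideanSpace ℝ (Fin d)) →L[ℝ] (EuclideanSpace ℂ (Fin N))) + M.flip (Complex.I • w)) x₁ :=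
      hMd.clm_apply (hasFDerivAt_const _ x₁)
    have h2 : HasFDerivAt (fun x => Complex.I • (A₂ x w))
        (Complex.I • ((A₂ x₁).comp (0 : (EuclideanSpace ℝ (Fin d)) →L[ℝ] (EuclideanSpace ℂ (Fin N))) + M.flip w)) x₁ :=
      (hMd.clm_apply (hasFDerivAt_const w x₁)).const_smul Complex.I
    have heq : (fun x => A₂ x (Complex.I • w)) = (fun x => Complex.I • (A₂ x w)) :=
      funext fun x => hA₂J x w
    rw [heq] at h1
    have := h1.unique h2
    have happ := congrArg (fun T : (EuclideanSpace ℝ (Fin d)) →L[ℝ] (EuclideanSpace ℂ (Fin N)) => T u) this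
    simpa [ContinuousLinearMap.add_apply, ContinuousLinearMap.comp_apply,
      ContinuousLinearMap.flip_apply, ContinuousLinearMap.zero_apply,
      ContinuousLinearMap.smul_apply] using happ
  -- part 1 : disjointness of the range and its J-image
  have hdisj : ∀ v : EuclideanSpace ℂ (Fin N), (∃ u, L u = v) → (∃ u', L u' = Jstd N v) → v = 0 := by
    rintro v ⟨u, rfl⟩ ⟨u', hu'⟩
    by_contra hv0
    have hstep : φ (Complex.I • (M u' (L u))) = φ (Complex.I • (M u (L u'))) := by
      have l1 : φ (Complex.I • (M u' (L u))) = φ (Complex.I • (Q u' u)) := by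
        rw [E4 u' u, smul_add, map_add]
        have h0 : φ (Complex.I • L (r u' u)) = 0 := by
          have := (htg (r u' u)).2; rwa [Jstd_apply] at this
        rw [h0, add_zero]
      have l2 : φ (Complex.I • (M u (L u'))) = φ (Complex.I • (Q u u')) := by
        rw [E4 u u', smul_add, map_add]
        have h0 : φ (Complex.I • L (r u u')) = 0 := by
          have := (htg (r u u')).2; rwa [Jstd_apply] at this
        rw [h0, add_zero]
      rw [l1, l2, hQsymm u' u]
    have e3a : H2 (L u) (L u) = -φ (M u (L u)) := by linarith [E3 u u]
    have e3b : H2 (L u') (L u') = -φ (M u' (L u')) := by linarith [E3 u' u']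
    have hMu'Lu' : M u' (L u') = Complex.I • (M u' (L u)) := by
      rw [hu', Jstd_apply, hMJ]
    have hMuLu' : M u (L u') = Complex.I • (M u (L u)) := by
      rw [hu', Jstd_apply, hMJ]
    have hIIMu : φ (Complex.I • (M u (L u'))) = -φ (M u (L u)) := by
      rw [hMuLu', smul_smul, Complex.I_mul_I, neg_one_smul, map_neg]
    have hb2 : φ (M u' (L u')) = -φ (M u (L u)) := by
      rw [hMu'Lu', hstep, hIIMu]
    have hL2 : iteratedFDeriv ℝ 2 ρ p ![L u, L u] = H2 (L u) (L u) := by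
      rw [iteratedFDeriv_two_apply]
      simp [hH2def]
    have hJv : Jstd N (L u) = L u' := hu'.symm
    have hL2' : iteratedFDeriv ℝ 2 ρ p ![Jstd N (L u), Jstd N (L u)] = H2 (L u') (L u') := by
      rw [hJv, iteratedFDeriv_two_apply]
      simp [hH2def]
    have hpos := hspc (L u) hv0 (htg u).1 (htg u).2
    rw [hL2, hL2', e3a, e3b, hb2] at hpos
    linarith
  -- part 2 : injectivity of L
  have hker : ∀ u, L u = 0 → u = 0 := by
    intro u hLu
    set V : EuclideanSpace ℝ (Fin d) → EuclideanSpace ℝ (Fin d) := fun x => kf x u with hVdef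
    have hVc : ContDiffAt ℝ 1 V x₁ := hkc.clm_apply contDiffAt_const
    have hkerF : ∀ᶠ x in 𝓝 x₁, fderiv ℝ F x (V x) = 0 := by
      filter_upwards [hkey] with x hx
      have h := congrArg (fun T : (EuclideanSpace ℝ (Fin d)) →L[ℝ] (EuclideanSpace ℂ (Fin N)) => T u) hx
      simp only [ContinuousLinearMap.coe_comp', comp_apply] at h
      rw [hLu, map_zero] at h
      exact h.symm
    obtain ⟨s, hs_nhds, hsinj⟩ := hinjF
    obtain ⟨γ, hγ0, ε, hε, hγ⟩ := hVc.exists_forall_mem_closedBall_exists_eq_forall_mem_Ioo_hasDerivAt₀ 0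
    have h0mem : (0:ℝ) ∈ Ioo (0 - ε) (0 + ε) := by constructor <;> linarith
    have htγ : Tendsto γ (𝓝 0) (𝓝 x₁) := by
      rw [← hγ0]
      exact (hγ 0 h0mem).continuousAt
    have hW : ∀ᶠ x in 𝓝 x₁, (DifferentiableAt ℝ F x ∧ fderiv ℝ F x (V x) = 0) ∧ x ∈ s :=
      (hFd.and hkerF).and hs_nhds
    have hall : ∀ᶠ t in 𝓝 (0:ℝ),
        ((DifferentiableAt ℝ F (γ t) ∧ fderiv ℝ F (γ t) (V (γ t)) = 0) ∧ γ t ∈ s)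
          ∧ t ∈ Ioo (0 - ε) (0 + ε) :=
      (htγ.eventually hW).and (Ioo_mem_nhds (by linarith) (by linarith))
    rw [Metric.eventually_nhds_iff_ball] at hall
    obtain ⟨δ, hδpos, hδ⟩ := hall
    have hconv : Convex ℝ (Metric.ball (0:ℝ) δ) := convex_ball 0 δ
    have hzero_deriv : ∀ t ∈ Metric.ball (0:ℝ) δ,
        HasDerivWithinAt (fun t => F (γ t)) ((fun _ => (0 : EuclideanSpace ℂ (Fin N))) t)
          (Metric.ball (0:ℝ) δ) t := by
      intro t ht
      have hprops := hδ t ht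
      have hd : HasDerivAt γ (V (γ t)) t := hγ t hprops.2
      have hF' : HasFDerivAt F (fderiv ℝ F (γ t)) (γ t) := hprops.1.1.1.hasFDerivAt
      have hcd := hF'.comp_hasDerivAt t hd
      rw [hprops.1.1.2] at hcd
      exact hcd.hasDerivWithinAt
    have hconst : ∀ t ∈ Metric.ball (0:ℝ) δ, γ t = x₁ := by
      intro t ht
      have h0 : (0:ℝ) ∈ Metric.ball (0:ℝ) δ := Metric.mem_ball_self hδpos
      have hb := Convex.norm_image_sub_le_of_norm_hasDerivWithin_le (C := 0) hzero_deriv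
        (fun x _ => by simp) hconv h0 ht
      rw [zero_mul] at hb
      have hFeq : F (γ t) = F (γ 0) := by
        have : ‖F (γ t) - F (γ 0)‖ = 0 := le_antisymm hb (norm_nonneg _)
        rwa [norm_sub_eq_zero_iff] at this
      rw [hγ0] at hFeq
      exact hsinj (hδ t ht).1.2 (mem_of_mem_nhds hs_nhds) hFeq
    have hγconst : γ =ᶠ[𝓝 (0:ℝ)] fun _ => x₁ := by
      filter_upwards [Metric.ball_mem_nhds (0:ℝ) hδpos] with t ht
      exact hconst t ht
    have hd0 : HasDerivAt γ (V (γ 0)) 0 := hγ 0 h0mem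
    have hd0' : HasDerivAt γ (0 : EuclideanSpace ℝ (Fin d)) 0 :=
      (hasDerivAt_const 0 x₁).congr_of_eventuallyEq hγconst
    have hV0 : V (γ 0) = 0 := hd0.unique hd0'
    rw [hγ0] at hV0
    have hV0' : kf x₁ u = 0 := hV0
    rwa [hk1, ContinuousLinearMap.id_apply] at hV0'
  have hLinj : Function.Injective L := by
    intro u₁ u₂ h
    have h2 : L (u₁ - u₂) = 0 := by rw [map_sub, h, sub_self]
    exact sub_eq_zero.mp (hker _ h2)
  exact ⟨hdisj, hLinj⟩

end AuxMain

/-- If a Lie group `G` of dimension `d` acts freely by biholomorphisms on an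
`(n+1)`-dimensional complex manifold `M = {ρ < 0}` with strongly pseudoconvex
boundary `S = {ρ = 0}`, and at some `p ∈ S` the orbit satisfies
`T_p(G·p) ⊂ T_p^c(S)`, then `d = dim_ℝ G ≤ n`. -/
theorem lie_group_orbit_tangency_dim_bound {n d : ℕ}
    (G : Type*) [TopologicalSpace G] [ChartedSpace (EuclideanSpace ℝ (Fin d)) G]
    [Group G] [LieGroup (𝓡 d) (⊤ : ℕ∞) G]
    (ρ : EuclideanSpace ℂ (Fin (n + 1)) → ℝ) (hρ : ContDiff ℝ (⊤ : ℕ∞) ρ)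
    (hgrad : ∀ q, ρ q = 0 → fderiv ℝ ρ q ≠ 0)
    -- strong pseudoconvexity of `S = {ρ = 0}`
    (hspc : ∀ q, ρ q = 0 → ∀ v : EuclideanSpace ℂ (Fin (n + 1)), v ≠ 0 →
      fderiv ℝ ρ q v = 0 → fderiv ℝ ρ q (Jstd (n + 1) v) = 0 →
      0 < iteratedFDeriv ℝ 2 ρ q ![v, v] +
          iteratedFDeriv ℝ 2 ρ q ![Jstd (n + 1) v, Jstd (n + 1) v])
    -- the action of `G`
    (a : G → EuclideanSpace ℂ (Fin (n + 1)) → EuclideanSpace ℂ (Fin (n + 1)))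
    (hsmooth : ContMDiff ((𝓡 d).prod 𝓘(ℝ, EuclideanSpace ℂ (Fin (n + 1))))
      𝓘(ℝ, EuclideanSpace ℂ (Fin (n + 1)))
      (⊤ : ℕ∞) (fun q : G × EuclideanSpace ℂ (Fin (n + 1)) => a q.1 q.2))
    (hone : ∀ z, a 1 z = z)
    (hmul : ∀ g h z, a g (a h z) = a (g * h) z)
    -- the action is holomorphic
    (hhol : ∀ g, Differentiable ℂ (a g))
    -- the action is free
    (hfree : ∀ g z, a g z = z → g = 1)
    -- the action preserves `M = {ρ < 0}` and its boundary `S = {ρ = 0}`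
    (hinvM : ∀ g z, ρ z < 0 → ρ (a g z) < 0)
    (hinvS : ∀ g z, ρ z = 0 → ρ (a g z) = 0)
    -- the tangency condition `T_p(G·p) ⊂ T_p^c(S)` at some `p ∈ S`
    (p : EuclideanSpace ℂ (Fin (n + 1))) (hp : ρ p = 0)
    (htang : ∀ v : TangentSpace (𝓡 d) (1 : G),
      fderiv ℝ ρ p
        (mfderiv (𝓡 d) 𝓘(ℝ, EuclideanSpace ℂ (Fin (n + 1))) (fun g => a g p) (1 : G) v) = 0 ∧
      fderiv ℝ ρ p (Jstd (n + 1)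
        (mfderiv (𝓡 d) 𝓘(ℝ, EuclideanSpace ℂ (Fin (n + 1))) (fun g => a g p) (1 : G) v)) = 0) :
    d ≤ n := by
  classical
  set e := extChartAt (𝓡 d) (1 : G) with hedef
  set x₁ : EuclideanSpace ℝ (Fin d) := e 1 with hx₁def
  have h1src : (1 : G) ∈ e.source := mem_extChartAt_source (I := 𝓡 d) 1
  have hx₁tgt : x₁ ∈ e.target := mem_extChartAt_target (I := 𝓡 d) 1
  have hsymm1 : e.symm x₁ = 1 := e.left_inv h1src
  have htgt_nhds : e.target ∈ 𝓝 x₁ := (isOpen_extChartAt_target (I := 𝓡 d) 1).mem_nhds hx₁tgt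
  set b : EuclideanSpace ℝ (Fin d) → EuclideanSpace ℂ (Fin (n+1)) → EuclideanSpace ℂ (Fin (n+1)) :=
    fun x z => a (e.symm x) z with hbdef
  set m : EuclideanSpace ℝ (Fin d) → EuclideanSpace ℝ (Fin d) → EuclideanSpace ℝ (Fin d) :=
    fun x y => e (e.symm x * e.symm y) with hmdef
  -- injectivity of the orbit map on the group
  have hainj : ∀ g h' : G, a g p = a h' p → g = h' := by
    intro g h' hg
    have h2 : a (h'⁻¹ * g) p = p := by
      rw [← hmul, hg, hmul, inv_mul_cancel, hone]
    have h3 := hfree _ _ h2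
    have : h' * (h'⁻¹ * g) = h' * 1 := by rw [h3]
    rwa [← mul_assoc, mul_inv_cancel, one_mul, mul_one] at this
  -- smoothness of the inverse chart
  have hsymm : ∀ x ∈ e.target, ContMDiffAt 𝓘(ℝ, EuclideanSpace ℝ (Fin d)) (𝓡 d) (⊤ : ℕ∞) e.symm x :=
    fun x hx => (contMDiffOn_extChartAt_symm (I := 𝓡 d) 1 x hx).contMDiffAt
      ((isOpen_extChartAt_target (I := 𝓡 d) 1).mem_nhds hx)
  -- smoothness of b
  have hbE : ∀ᶠ x in 𝓝 x₁, ContDiffAt ℝ 2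
      (fun q : (EuclideanSpace ℝ (Fin d)) × (EuclideanSpace ℂ (Fin (n+1))) => b q.1 q.2) (x, p) := by
    refine Filter.eventually_of_mem htgt_nhds fun x hx => ?_
    have h1 : ContMDiffAt ((𝓡 d).prod 𝓘(ℝ, EuclideanSpace ℂ (Fin (n+1))))
        𝓘(ℝ, EuclideanSpace ℂ (Fin (n+1))) 2
        (fun q : (EuclideanSpace ℝ (Fin d)) × (EuclideanSpace ℂ (Fin (n+1))) => b q.1 q.2) (x, p) := by
      have hpair : ContMDiffAt ((𝓡 d).prod 𝓘(ℝ, EuclideanSpace ℂ (Fin (n+1))))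
          ((𝓡 d).prod 𝓘(ℝ, EuclideanSpace ℂ (Fin (n+1)))) 2
          (fun q : (EuclideanSpace ℝ (Fin d)) × (EuclideanSpace ℂ (Fin (n+1))) =>
            ((e.symm q.1, q.2) : G × EuclideanSpace ℂ (Fin (n+1)))) (x, p) :=
        (((hsymm x hx).of_le (WithTop.coe_le_coe.mpr le_top)).comp (x, p) contMDiffAt_fst).prodMk contMDiffAt_snd
      exact ((hsmooth.contMDiffAt).of_le (WithTop.coe_le_coe.mpr le_top)).comp (x, p) hpair
    have h2 : ContMDiffAt 𝓘(ℝ, (EuclideanSpace ℝ (Fin d)) × (EuclideanSpace ℂ (Fin (n+1))))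
        𝓘(ℝ, EuclideanSpace ℂ (Fin (n+1))) 2
        (fun q : (EuclideanSpace ℝ (Fin d)) × (EuclideanSpace ℂ (Fin (n+1))) => b q.1 q.2) (x, p) := by
      rw [modelWithCornersSelf_prod, ← chartedSpaceSelf_prod]
      exact h1
    exact_mod_cast contMDiffAt_iff_contDiffAt.mp h2
  have hb1 : ∀ z, b x₁ z = z := by
    intro z
    show a (e.symm x₁) z = z
    rw [hsymm1]; exact hone z
  have hhol' : ∀ x, Differentiable ℂ (b x) := fun x => hhol (e.symm x)
  have horb : ∀ x y, ρ (b x (b y p)) = 0 := fun x y => hinvS _ _ (hinvS _ _ hp)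
  -- smoothness of m
  have hmulc : ContMDiff ((𝓡 d).prod (𝓡 d)) (𝓡 d) (⊤ : ℕ∞) (fun q : G × G => q.1 * q.2) :=
    contMDiff_mul (𝓡 d) (⊤ : ℕ∞)
  have hmulAt : ∀ x ∈ e.target, ContMDiffAt ((𝓡 d).prod (𝓡 d)) (𝓡 d) 2
      (fun q : (EuclideanSpace ℝ (Fin d)) × (EuclideanSpace ℝ (Fin d)) =>
        e.symm q.1 * e.symm q.2) (x, x₁) := by
    intro x hx
    have hpair : ContMDiffAt ((𝓡 d).prod (𝓡 d)) ((𝓡 d).prod (𝓡 d)) 2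
        (fun q : (EuclideanSpace ℝ (Fin d)) × (EuclideanSpace ℝ (Fin d)) =>
          ((e.symm q.1, e.symm q.2) : G × G)) (x, x₁) :=
      (((hsymm x hx).of_le (WithTop.coe_le_coe.mpr le_top)).comp (x, x₁) contMDiffAt_fst).prodMk
        (((hsymm x₁ hx₁tgt).of_le (WithTop.coe_le_coe.mpr le_top)).comp (x, x₁) contMDiffAt_snd)
    exact ((hmulc.contMDiffAt).of_le (WithTop.coe_le_coe.mpr le_top)).comp (x, x₁) hpair
  have hmE : ∀ᶠ x in 𝓝 x₁, ContDiffAt ℝ 2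
      (fun q : (EuclideanSpace ℝ (Fin d)) × (EuclideanSpace ℝ (Fin d)) => m q.1 q.2) (x, x₁) := by
    refine Filter.eventually_of_mem htgt_nhds fun x hx => ?_
    have hval : e.symm x * e.symm x₁ = e.symm x := by rw [hsymm1, mul_one]
    have hmem : e.symm x * e.symm x₁ ∈ (chartAt (EuclideanSpace ℝ (Fin d)) (1 : G)).source := by
      rw [hval]
      have h := e.map_target hx
      rwa [hedef, extChartAt_source] at h
    have hechart : ContMDiffAt (𝓡 d) 𝓘(ℝ, EuclideanSpace ℝ (Fin d)) 2
        (extChartAt (𝓡 d) (1 : G)) (e.symm x * e.symm x₁) :=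
      contMDiffAt_extChartAt' (I := 𝓡 d) hmem
    have h1 : ContMDiffAt ((𝓡 d).prod (𝓡 d)) 𝓘(ℝ, EuclideanSpace ℝ (Fin d)) 2
        (fun q : (EuclideanSpace ℝ (Fin d)) × (EuclideanSpace ℝ (Fin d)) => m q.1 q.2) (x, x₁) :=
      hechart.comp (x, x₁) (hmulAt x hx)
    have h2 : ContMDiffAt 𝓘(ℝ, (EuclideanSpace ℝ (Fin d)) × (EuclideanSpace ℝ (Fin d)))
        𝓘(ℝ, EuclideanSpace ℝ (Fin d)) 2
        (fun q : (EuclideanSpace ℝ (Fin d)) × (EuclideanSpace ℝ (Fin d)) => m q.1 q.2) (x, x₁) := by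
      rw [modelWithCornersSelf_prod, ← chartedSpaceSelf_prod]
      exact h1
    exact_mod_cast contMDiffAt_iff_contDiffAt.mp h2
  have hm1 : ∀ᶠ x in 𝓝 x₁, m x x₁ = x := by
    refine Filter.eventually_of_mem htgt_nhds fun x hx => ?_
    show e (e.symm x * e.symm x₁) = x
    rw [hsymm1, mul_one, e.right_inv hx]
  have hm2 : ∀ᶠ y in 𝓝 x₁, m x₁ y = y := by
    refine Filter.eventually_of_mem htgt_nhds fun y hy => ?_
    show e (e.symm x₁ * e.symm y) = y
    rw [hsymm1, one_mul, e.right_inv hy]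
  have hgrp : ∀ᶠ q : (EuclideanSpace ℝ (Fin d)) × (EuclideanSpace ℝ (Fin d)) in 𝓝 (x₁, x₁),
      b q.1 (b q.2 p) = b (m q.1 q.2) p := by
    have hcont : ContinuousAt
        (fun q : (EuclideanSpace ℝ (Fin d)) × (EuclideanSpace ℝ (Fin d)) =>
          e.symm q.1 * e.symm q.2) (x₁, x₁) := (hmulAt x₁ hx₁tgt).continuousAt
    have hval : e.symm x₁ * e.symm x₁ = 1 := by rw [hsymm1, one_mul]
    have hsrc : e.source ∈ 𝓝 (e.symm x₁ * e.symm x₁) := by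
      rw [hval]
      exact (isOpen_extChartAt_source (I := 𝓡 d) 1).mem_nhds h1src
    have hev : ∀ᶠ q : (EuclideanSpace ℝ (Fin d)) × (EuclideanSpace ℝ (Fin d)) in 𝓝 (x₁, x₁),
        e.symm q.1 * e.symm q.2 ∈ e.source := hcont.eventually_mem hsrc
    filter_upwards [hev] with q hq
    show a (e.symm q.1) (a (e.symm q.2) p) = a (e.symm (e (e.symm q.1 * e.symm q.2))) p
    rw [hmul, e.left_inv hq]
  have hinjF : ∃ s ∈ 𝓝 x₁, Set.InjOn (fun x => b x p) s := by
    refine ⟨e.target, htgt_nhds, fun x hx y hy hxy => ?_⟩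
    have h := hainj _ _ hxy
    rw [← e.right_inv hx, ← e.right_inv hy, h]
  -- the mfderiv bridge
  have hmdiff : MDifferentiableAt (𝓡 d) 𝓘(ℝ, EuclideanSpace ℂ (Fin (n+1))) (fun g => a g p) 1 := by
    have h := (hsmooth.contMDiffAt (x := ((1 : G), p))).comp (1 : G)
      (contMDiffAt_id.prodMk contMDiffAt_const)
    exact h.mdifferentiableAt (by simp)
  have hbridge : mfderiv (𝓡 d) 𝓘(ℝ, EuclideanSpace ℂ (Fin (n+1))) (fun g => a g p) 1
      = fderiv ℝ (fun x => b x p) x₁ := by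
    rw [hmdiff.mfderiv]
    rw [(𝓡 d).range_eq_univ, fderivWithin_univ]
    have hwr : writtenInExtChartAt (𝓡 d) 𝓘(ℝ, EuclideanSpace ℂ (Fin (n+1))) (1 : G)
        (fun g => a g p) = fun x => b x p := by
      funext x
      simp only [writtenInExtChartAt, Function.comp_apply, extChartAt_model_space_eq_id,
        PartialEquiv.refl_coe, id_eq]
      rfl
    rw [hwr]
  have htg : ∀ u : EuclideanSpace ℝ (Fin d),
      fderiv ℝ ρ p (fderiv ℝ (fun x => b x p) x₁ u) = 0 ∧
      fderiv ℝ ρ p (Jstd (n+1) (fderiv ℝ (fun x => b x p) x₁ u)) = 0 := by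
    intro u
    have h := htang u
    rwa [hbridge] at h
  -- apply the analytic core
  obtain ⟨hdisj, hLinj⟩ := aux_main ρ (hρ.of_le (WithTop.coe_le_coe.mpr le_top)) p b m x₁ hbE hb1 hhol' horb hmE hm1 hm2
    hgrp hinjF htg (fun v hv h1 h2 => hspc p hp v hv h1 h2)
  -- linear algebra endgame
  have hfinal : d + 1 ≤ n + 1 := by
    refine endgame (fderiv ℝ (fun x => b x p) x₁) (fderiv ℝ ρ p) (hgrad p hp) hLinj
      (fun u => (htg u).1) (fun u => (htg u).2) ?_
    rintro v ⟨u, hu⟩ ⟨u', hu'⟩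
    exact hdisj v ⟨u, hu⟩ ⟨u', hu'⟩
  omega
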